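/- arXiv:2510.15390 — 3 statements merged into one kernel-verified Lean document; each statement's English description precedes it below -/
import Mathlib

section
/- Expectation of a product of two Gaussian kernels over a joint Gaussian input: with K_k, K_l Gaussian kernels and (z^k, z^l) jointly Gaussian with stacked mean m_Z and covariance S_{ZZ}, E[K_k(z^k, z_i^k) K_l(z^l, z_j^l)] = σ_k² σ_l² |I + S_{ZZ} Λ⁻¹|^{-1/2} exp(−(1/2)(Z_{ij} − m_Z)ᵀ(Λ + S_{ZZ})⁻¹(Z_{ij} − m_Z)), where Λ = blkdiag(Λ^k, Λ^l) and Z_{ij} = (z_i^k, z_j^l). -/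
/-!
The Gaussian density with covariance `S` and the kernel with length scales `Λ` are both
exponentials of quadratic forms, so their product is one as well. Completing the square,
`(w - m)ᵀ S⁻¹ (w - m) + (w - z)ᵀ Λ⁻¹ (w - z)`
`  = (w - c)ᵀ (S⁻¹ + Λ⁻¹) (w - c) + (z - m)ᵀ (Λ + S)⁻¹ (z - m)`,
where the constant uses `Λ⁻¹ (S⁻¹ + Λ⁻¹)⁻¹ S⁻¹ = (Λ + S)⁻¹`. Integrating the first summand gives
`(2π)^{n/2} det(S⁻¹ + Λ⁻¹)^{-1/2}`, which with the normalisation of the density leaves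
`det(S (S⁻¹ + Λ⁻¹))^{-1/2} = det(I + S Λ⁻¹)^{-1/2}`. For two kernels on the blocks `z^k`, `z^l`
the product of the kernels is a single kernel with the block diagonal `Λ = blkdiag(Λ^k, Λ^l)`.
-/

open Matrix MeasureTheory Real

noncomputable def gpdf {ι : Type} [Fintype ι] [DecidableEq ι] (m : ι → ℝ) (S : Matrix ι ι ℝ) (x : ι → ℝ) : ℝ :=
  (2 * Real.pi) ^ (-(Fintype.card ι : ℝ) / 2) * S.det ^ (-(1 : ℝ) / 2) *
    Real.exp (-(1 / 2) * ((x - m) ⬝ᵥ (S⁻¹ *ᵥ (x - m))))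

namespace Matrix

section Quadratic

variable {ι : Type*} [Fintype ι]

lemma IsSymm.dotProduct_mulVec_comm {R : Type*} [CommSemiring R] {M : Matrix ι ι R}
    (hM : M.IsSymm) (x y : ι → R) : x ⬝ᵥ (M *ᵥ y) = y ⬝ᵥ (M *ᵥ x) := by
  rw [dotProduct_mulVec, ← mulVec_transpose, hM.eq, dotProduct_comm]

lemma IsSymm.add_dotProduct_mulVec_add {R : Type*} [CommRing R] {M : Matrix ι ι R}
    (hM : M.IsSymm) (x y : ι → R) :
    (x + y) ⬝ᵥ (M *ᵥ (x + y)) = x ⬝ᵥ (M *ᵥ x) + 2 * (x ⬝ᵥ (M *ᵥ y)) + y ⬝ᵥ (M *ᵥ y) := by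
  rw [mulVec_add, dotProduct_add, add_dotProduct, add_dotProduct, hM.dotProduct_mulVec_comm y x]
  ring

variable [DecidableEq ι] {K : Type*} [Field K]

lemma IsSymm.quad_sub_add_quad_sub {A B : Matrix ι ι K} (hA : A.IsSymm) (hB : B.IsSymm)
    (hAB : IsUnit (A + B)) (w a b : ι → K) :
    (w - a) ⬝ᵥ (A *ᵥ (w - a)) + (w - b) ⬝ᵥ (B *ᵥ (w - b))
      = (w - (A + B)⁻¹ *ᵥ (A *ᵥ a + B *ᵥ b)) ⬝ᵥ
          ((A + B) *ᵥ (w - (A + B)⁻¹ *ᵥ (A *ᵥ a + B *ᵥ b)))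
        + (a - b) ⬝ᵥ ((B * (A + B)⁻¹ * A) *ᵥ (a - b)) := by
  have hdet : IsUnit (A + B).det := (isUnit_iff_isUnit_det _).1 hAB
  set c := (A + B)⁻¹ *ᵥ (A *ᵥ a + B *ᵥ b)
  have hc : (A + B) *ᵥ c = A *ᵥ a + B *ᵥ b := by
    rw [mulVec_mulVec, mul_nonsing_inv _ hdet, one_mulVec]
  have hcross : A *ᵥ (c - a) + B *ᵥ (c - b) = 0 := by
    rw [mulVec_sub, mulVec_sub, sub_add_sub_comm, ← add_mulVec, hc, sub_self]
  have hcb : c - b = ((A + B)⁻¹ * A) *ᵥ (a - b) := by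
    have h : (A + B) *ᵥ (c - b) = A *ᵥ (a - b) := by
      rw [mulVec_sub, hc, add_mulVec, mulVec_sub]
      abel
    rw [← mulVec_mulVec, ← h, mulVec_mulVec, nonsing_inv_mul _ hdet, one_mulVec]
  have hwc : (w - c) ⬝ᵥ (A *ᵥ (c - a)) + (w - c) ⬝ᵥ (B *ᵥ (c - b)) = 0 := by
    rw [← dotProduct_add, hcross, dotProduct_zero]
  -- `A (c - a) = -B (c - b)` turns the two constant terms into a single form in `B`.
  have hconst : (c - a) ⬝ᵥ (A *ᵥ (c - a)) + (c - b) ⬝ᵥ (B *ᵥ (c - b))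
      = (a - b) ⬝ᵥ ((B * (A + B)⁻¹ * A) *ᵥ (a - b)) := by
    rw [eq_neg_of_add_eq_zero_left hcross, dotProduct_neg, neg_add_eq_sub, ← sub_dotProduct,
      show c - b - (c - a) = a - b by abel, hcb, mulVec_mulVec, mul_assoc]
  rw [show w - a = (w - c) + (c - a) by abel, show w - b = (w - c) + (c - b) by abel,
    hA.add_dotProduct_mulVec_add, hB.add_dotProduct_mulVec_add, add_mulVec, dotProduct_add]
  linear_combination 2 * hwc + hconst

lemma inv_mul_inv_add_inv_mul_inv {S L : Matrix ι ι K} (hS : IsUnit S) (hL : IsUnit L) :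
    L⁻¹ * (S⁻¹ + L⁻¹)⁻¹ * S⁻¹ = (L + S)⁻¹ := by
  rw [← mul_inv_rev, ← mul_inv_rev, add_mul, mul_add, ← mul_assoc,
    mul_nonsing_inv _ ((isUnit_iff_isUnit_det S).1 hS),
    nonsing_inv_mul _ ((isUnit_iff_isUnit_det L).1 hL), one_mul, mul_one]

end Quadratic

section Blocks

variable {m n : Type*} [Fintype m] [Fintype n]

lemma dotProduct_fromBlocks_zero_mulVec_sub {R : Type*} [CommRing R] (P : Matrix m m R)
    (Q : Matrix n n R) (w : m ⊕ n → R) (x : m → R) (y : n → R) :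
    (w - Sum.elim x y) ⬝ᵥ (fromBlocks P 0 0 Q *ᵥ (w - Sum.elim x y))
      = ((fun a => w (Sum.inl a)) - x) ⬝ᵥ (P *ᵥ ((fun a => w (Sum.inl a)) - x))
        + ((fun b => w (Sum.inr b)) - y) ⬝ᵥ (Q *ᵥ ((fun b => w (Sum.inr b)) - y)) := by
  conv_lhs => rw [← Sum.elim_comp_inl_inr (w - Sum.elim x y)]
  rw [fromBlocks_mulVec, sumElim_dotProduct_sumElim, zero_mulVec, zero_mulVec, add_zero, zero_add]
  rfl

variable [DecidableEq m] [DecidableEq n]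

lemma inv_fromBlocks_zero {R : Type*} [CommRing R] {P : Matrix m m R} {Q : Matrix n n R}
    (hP : IsUnit P) (hQ : IsUnit Q) :
    (fromBlocks P 0 0 Q)⁻¹ = fromBlocks P⁻¹ 0 0 Q⁻¹ := by
  simp [inv_fromBlocks_zero₂₁_of_isUnit_iff P 0 Q (iff_of_true hP hQ)]

open scoped ComplexOrder in
lemma PosDef.fromBlocks_zero {𝕜 : Type*} [RCLike 𝕜] {P : Matrix m m 𝕜} {Q : Matrix n n 𝕜}
    (hP : P.PosDef) (hQ : Q.PosDef) : (fromBlocks P 0 0 Q).PosDef := by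
  have := hP.isUnit.invertible
  have hpsd : (fromBlocks P 0 0ᴴ Q).PosSemidef :=
    (PosDef.fromBlocks₁₁ 0 Q hP).2 (by simpa using hQ.posSemidef)
  rw [conjTranspose_zero] at hpsd
  exact hpsd.posDef_iff_isUnit.2 (isUnit_fromBlocks_zero₂₁.2 ⟨hP.isUnit, hQ.isUnit⟩)

end Blocks

end Matrix

section GaussianIntegral

variable {ι : Type*} [Fintype ι]

lemma integral_exp_neg_half_dotProduct_self :
    ∫ x : ι → ℝ, exp (-(1 / 2) * (x ⬝ᵥ x)) = (2 * π) ^ ((Fintype.card ι : ℝ) / 2) := by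
  have hprod : ∀ x : ι → ℝ, exp (-(1 / 2) * (x ⬝ᵥ x)) = ∏ i, exp (-(1 / 2) * x i ^ 2) := by
    intro x
    rw [← exp_sum, dotProduct, Finset.mul_sum]
    simp only [sq]
  have h1 : ∫ t : ℝ, exp (-(1 / 2) * t ^ 2) = √(2 * π) := by
    rw [integral_gaussian, div_div_eq_mul_div, div_one, mul_comm]
  simp_rw [hprod]
  rw [integral_fintype_prod_volume_eq_pow (fun t => exp (-(1 / 2) * t ^ 2)), h1, sqrt_eq_rpow,
    ← rpow_natCast, ← rpow_mul (by positivity), one_div_mul_eq_div]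

variable [DecidableEq ι]

lemma integral_comp_mulVec {E : Type*} [NormedAddCommGroup E] [NormedSpace ℝ E]
    {B : Matrix ι ι ℝ} (hB : B.det ≠ 0) (g : (ι → ℝ) → E) :
    ∫ x, g (B *ᵥ x) = |B.det|⁻¹ • ∫ y, g y := by
  have hf : LinearMap.det (toLin' B) ≠ 0 := by rwa [LinearMap.det_toLin']
  let e := ((toLin' B).equivOfDetNeZero hf).toContinuousLinearEquiv
  have hmap : Measure.map e volume = ENNReal.ofReal |B.det⁻¹| • volume := by
    rw [← LinearMap.det_toLin' B]
    exact Measure.map_linearMap_addHaar_eq_smul_addHaar volume hf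
  rw [← abs_inv, ← ENNReal.toReal_ofReal (abs_nonneg B.det⁻¹), ← integral_smul_measure, ← hmap]
  exact (e.toHomeomorph.measurableEmbedding.integral_map g).symm

open scoped MatrixOrder in
lemma integral_exp_neg_half_quad {M : Matrix ι ι ℝ} (hM : M.PosDef) (c : ι → ℝ) :
    ∫ x, exp (-(1 / 2) * ((x - c) ⬝ᵥ (M *ᵥ (x - c))))
      = (2 * π) ^ ((Fintype.card ι : ℝ) / 2) * M.det ^ (-(1 : ℝ) / 2) := by
  rw [integral_sub_right_eq_self (fun x => exp (-(1 / 2) * (x ⬝ᵥ (M *ᵥ x)))) c]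
  obtain ⟨B, rfl⟩ := CStarAlgebra.nonneg_iff_eq_star_mul_self.mp hM.posSemidef.nonneg
  have hquad : ∀ x, x ⬝ᵥ ((star B * B) *ᵥ x) = (B *ᵥ x) ⬝ᵥ (B *ᵥ x) := fun x => by
    rw [← mulVec_mulVec, dotProduct_mulVec, star_eq_conjTranspose,
      conjTranspose_eq_transpose_of_trivial, vecMul_transpose]
  have hdet : (star B * B).det = |B.det| ^ 2 := by
    rw [det_mul, star_eq_conjTranspose, det_conjTranspose, star_trivial, sq_abs, sq]
  have hB : B.det ≠ 0 := fun h => hM.det_pos.ne' (by rw [hdet, h, abs_zero, sq, mul_zero])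
  simp_rw [hquad]
  rw [integral_comp_mulVec hB (fun y => exp (-(1 / 2) * (y ⬝ᵥ y))),
    integral_exp_neg_half_dotProduct_self, hdet, smul_eq_mul, mul_comm, ← rpow_natCast,
    ← rpow_mul (abs_nonneg _)]
  norm_num [rpow_neg_one]

end GaussianIntegral

theorem integral_gpdf_mul_exp_neg_half_quad {ι : Type} [Fintype ι] [DecidableEq ι]
    {S L : Matrix ι ι ℝ} (hS : S.PosDef) (hL : L.PosDef) (m z : ι → ℝ) :
    ∫ w, gpdf m S w * exp (-(1 / 2) * ((w - z) ⬝ᵥ (L⁻¹ *ᵥ (w - z))))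
      = (1 + S * L⁻¹).det ^ (-(1 : ℝ) / 2) *
          exp (-(1 / 2) * ((z - m) ⬝ᵥ ((L + S)⁻¹ *ᵥ (z - m)))) := by
  have hP : (S⁻¹ + L⁻¹).PosDef := hS.inv.add hL.inv
  set c := (S⁻¹ + L⁻¹)⁻¹ *ᵥ (S⁻¹ *ᵥ m + L⁻¹ *ᵥ z)
  set n : ℝ := (Fintype.card ι : ℝ)
  have hpoint : ∀ w, gpdf m S w * exp (-(1 / 2) * ((w - z) ⬝ᵥ (L⁻¹ *ᵥ (w - z))))
      = (2 * π) ^ (-n / 2) * S.det ^ (-(1 : ℝ) / 2) *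
          exp (-(1 / 2) * ((z - m) ⬝ᵥ ((L + S)⁻¹ *ᵥ (z - m)))) *
          exp (-(1 / 2) * ((w - c) ⬝ᵥ ((S⁻¹ + L⁻¹) *ᵥ (w - c)))) := by
    intro w
    have hsq := (isHermitian_iff_isSymm.1 hS.inv.1).quad_sub_add_quad_sub
      (isHermitian_iff_isSymm.1 hL.inv.1) hP.isUnit w m z
    rw [inv_mul_inv_add_inv_mul_inv hS.isUnit hL.isUnit, ← neg_sub z m, neg_dotProduct,
      mulVec_neg, dotProduct_neg, neg_neg] at hsq
    rw [gpdf, mul_assoc, ← exp_add, mul_assoc _ (exp _), ← exp_add]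
    congr 2
    linear_combination (-(1 / 2) : ℝ) * hsq
  simp_rw [hpoint]
  rw [integral_const_mul, integral_exp_neg_half_quad hP]
  have hpi : (2 * π) ^ (-n / 2) * (2 * π) ^ (n / 2) = 1 := by
    rw [← rpow_add (by positivity), neg_div, neg_add_cancel, rpow_zero]
  have hdet : S.det ^ (-(1 : ℝ) / 2) * (S⁻¹ + L⁻¹).det ^ (-(1 : ℝ) / 2)
      = (1 + S * L⁻¹).det ^ (-(1 : ℝ) / 2) := by
    rw [← mul_rpow hS.det_pos.le hP.det_pos.le, ← det_mul, mul_add,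
      mul_nonsing_inv _ hS.det_pos.ne'.isUnit]
  linear_combination (S.det ^ (-(1 : ℝ) / 2) * (S⁻¹ + L⁻¹).det ^ (-(1 : ℝ) / 2) *
      exp (-(1 / 2) * ((z - m) ⬝ᵥ ((L + S)⁻¹ *ᵥ (z - m))))) * hpi +
    exp (-(1 / 2) * ((z - m) ⬝ᵥ ((L + S)⁻¹ *ᵥ (z - m)))) * hdet

theorem stmt10_general (dk dl : ℕ)
    (mZ : (Fin dk ⊕ Fin dl) → ℝ) (SZZ : Matrix (Fin dk ⊕ Fin dl) (Fin dk ⊕ Fin dl) ℝ)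
    (hSZZ : SZZ.PosDef)
    (Lamk : Matrix (Fin dk) (Fin dk) ℝ) (Laml : Matrix (Fin dl) (Fin dl) ℝ)
    (hLamk : Lamk.PosDef) (hLaml : Laml.PosDef)
    (sigk2 sigl2 : ℝ)
    (zik : Fin dk → ℝ) (zjl : Fin dl → ℝ) :
    (∫ w : (Fin dk ⊕ Fin dl) → ℝ,
        gpdf mZ SZZ w *
          ((sigk2 * Real.exp (-(1 / 2) *
              (((fun a => w (Sum.inl a)) - zik) ⬝ᵥ
                (Lamk⁻¹ *ᵥ ((fun a => w (Sum.inl a)) - zik))))) *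
            (sigl2 * Real.exp (-(1 / 2) *
              (((fun a => w (Sum.inr a)) - zjl) ⬝ᵥ
                (Laml⁻¹ *ᵥ ((fun a => w (Sum.inr a)) - zjl)))))))
      = sigk2 * sigl2 *
          ((1 : Matrix (Fin dk ⊕ Fin dl) (Fin dk ⊕ Fin dl) ℝ) +
              SZZ * (Matrix.fromBlocks Lamk 0 0 Laml)⁻¹).det ^ (-(1 : ℝ) / 2) *
          Real.exp (-(1 / 2) *
            ((Sum.elim zik zjl - mZ) ⬝ᵥ
              ((Matrix.fromBlocks Lamk 0 0 Laml + SZZ)⁻¹ *ᵥ (Sum.elim zik zjl - mZ)))) := by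
  calc _ = ∫ w, sigk2 * sigl2 * (gpdf mZ SZZ w * exp (-(1 / 2) *
          ((w - Sum.elim zik zjl) ⬝ᵥ
            ((fromBlocks Lamk 0 0 Laml)⁻¹ *ᵥ (w - Sum.elim zik zjl))))) := by
        congr 1 with w
        rw [inv_fromBlocks_zero hLamk.isUnit hLaml.isUnit, dotProduct_fromBlocks_zero_mulVec_sub,
          mul_add, exp_add]
        ring
    _ = _ := by
      rw [integral_const_mul,
        integral_gpdf_mul_exp_neg_half_quad hSZZ (hLamk.fromBlocks_zero hLaml)]
      ring

/-- Expectation of a product of two Gaussian kernels over a jointly Gaussian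
input `Z = (z^k, z^l)`:
`E[K_k(z^k,z_i^k) K_l(z^l,z_j^l)] = σ_k²σ_l² |I + S_ZZ Λ⁻¹|^{-1/2}
exp(−½ (Z_ij − m_Z)ᵀ(Λ+S_ZZ)⁻¹(Z_ij − m_Z))` with `Λ = blkdiag(Λ^k, Λ^l)`. -/
theorem stmt10 (dk dl : ℕ)
    (mZ : (Fin dk ⊕ Fin dl) → ℝ) (SZZ : Matrix (Fin dk ⊕ Fin dl) (Fin dk ⊕ Fin dl) ℝ)
    (hSZZ : SZZ.PosDef)
    (Lamk : Matrix (Fin dk) (Fin dk) ℝ) (Laml : Matrix (Fin dl) (Fin dl) ℝ)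
    (hLamk : Lamk.PosDef) (hLaml : Laml.PosDef)
    (hsum : (Matrix.fromBlocks Lamk 0 0 Laml + SZZ).PosDef)
    (sigk2 sigl2 : ℝ) (hsigk : 0 < sigk2) (hsigl : 0 < sigl2)
    (zik : Fin dk → ℝ) (zjl : Fin dl → ℝ) :
    (∫ w : (Fin dk ⊕ Fin dl) → ℝ,
        gpdf mZ SZZ w *
          ((sigk2 * Real.exp (-(1 / 2) *
              (((fun a => w (Sum.inl a)) - zik) ⬝ᵥ
                (Lamk⁻¹ *ᵥ ((fun a => w (Sum.inl a)) - zik))))) *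
            (sigl2 * Real.exp (-(1 / 2) *
              (((fun a => w (Sum.inr a)) - zjl) ⬝ᵥ
                (Laml⁻¹ *ᵥ ((fun a => w (Sum.inr a)) - zjl)))))))
      = sigk2 * sigl2 *
          ((1 : Matrix (Fin dk ⊕ Fin dl) (Fin dk ⊕ Fin dl) ℝ) +
              SZZ * (Matrix.fromBlocks Lamk 0 0 Laml)⁻¹).det ^ (-(1 : ℝ) / 2) *
          Real.exp (-(1 / 2) *
            ((Sum.elim zik zjl - mZ) ⬝ᵥ
              ((Matrix.fromBlocks Lamk 0 0 Laml + SZZ)⁻¹ *ᵥ (Sum.elim zik zjl - mZ)))) :=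
  stmt10_general dk dl mZ SZZ hSZZ Lamk Laml hLamk hLaml sigk2 sigl2 zik zjl
end

section
/- For a block lower-triangular Cholesky factor L = [[A, 0],[B, C]] with LLᵀ = Σ = [[S_{uu}, S_{ux}],[S_{xu}, S_{xx}]] (A, C lower triangular with positive diagonals), and a linear-Gaussian prediction with predicted covariance Σ⁻ = Φ Σ Φᵀ + Σ_p,X, where Φ = [[I,0],[A_u, A_x]] and Σ_p,X = blkdiag(0, Σ_p), the updated Cholesky factor L⁻ = [[A⁻,0],[B⁻,C⁻]] of Σ⁻ satisfies A⁻ = A, B⁻ = A_u A + A_x B, and C⁻ C⁻ᵀ = A_x C Cᵀ A_xᵀ + Σ_p. In particular Σ⁻ = L⁻ (L⁻)ᵀ. -/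
open Matrix

/-- Cholesky update for the linear-Gaussian prediction step. If
`Σ = L Lᵀ` with block lower-triangular `L = [[A,0],[B,C]]` (A, C lower triangular with
positive diagonal), `Φ = [[I,0],[A_u,A_x]]`, `Σ_p` positive semidefinite, and `C⁻` satisfies
`C⁻ C⁻ᵀ = A_x C Cᵀ A_xᵀ + Σ_p`, then with `A⁻ = A` and `B⁻ = A_u A + A_x B`,
`Φ Σ Φᵀ + blkdiag(0, Σ_p) = L⁻ (L⁻)ᵀ` where `L⁻ = [[A⁻,0],[B⁻,C⁻]]`. -/
theorem stmt11 (nu nx : ℕ)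
    (A : Matrix (Fin nu) (Fin nu) ℝ) (B : Matrix (Fin nx) (Fin nu) ℝ)
    (C Cm : Matrix (Fin nx) (Fin nx) ℝ)
    (Au : Matrix (Fin nx) (Fin nu) ℝ) (Ax : Matrix (Fin nx) (Fin nx) ℝ)
    (Sp : Matrix (Fin nx) (Fin nx) ℝ) (hSp : Sp.PosSemidef)
    (hAtri : ∀ i j : Fin nu, i < j → A i j = 0) (hAdiag : ∀ i : Fin nu, 0 < A i i)
    (hCtri : ∀ i j : Fin nx, i < j → C i j = 0) (hCdiag : ∀ i : Fin nx, 0 < C i i)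
    (hCmtri : ∀ i j : Fin nx, i < j → Cm i j = 0) (hCmdiag : ∀ i : Fin nx, 0 < Cm i i)
    (Sig : Matrix (Fin nu ⊕ Fin nx) (Fin nu ⊕ Fin nx) ℝ)
    (hSig : Sig = Matrix.fromBlocks A 0 B C * (Matrix.fromBlocks A 0 B C)ᵀ)
    (hCm : Cm * Cmᵀ = Ax * C * Cᵀ * Axᵀ + Sp) :
    Matrix.fromBlocks 1 0 Au Ax * Sig * (Matrix.fromBlocks 1 0 Au Ax)ᵀ +
        Matrix.fromBlocks 0 0 0 Sp
      = Matrix.fromBlocks A 0 (Au * A + Ax * B) Cm *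
          (Matrix.fromBlocks A 0 (Au * A + Ax * B) Cm)ᵀ := by
  subst hSig
  simp only [Matrix.fromBlocks_transpose, Matrix.fromBlocks_multiply, Matrix.fromBlocks_add]
  simp only [transpose_zero, transpose_one, Matrix.mul_zero, Matrix.zero_mul,
    add_zero, zero_add, Matrix.one_mul, Matrix.mul_one, transpose_add, transpose_mul]
  rw [Matrix.fromBlocks_inj]
  refine ⟨rfl, ?_, ?_, ?_⟩ <;>
    simp only [hCm, Matrix.mul_add, Matrix.add_mul, Matrix.mul_assoc] <;>
    abel
end

section
/- Cholesky update under row/column augmentation: let Σ = [[Σ₁₁, Σ₁₂],[Σ₂₁, Σ₂₂]] have Cholesky factor L = [[A,0],[B,C]], and let the augmented matrix Σ̄ be obtained by inserting a middle block row/column (σ₁, σ, σ₂) so that Σ̄ = [[Σ₁₁, σ₁, Σ₁₂],[σ₁ᵀ, σ, σ₂ᵀ],[Σ₂₁, σ₂, Σ₂₂]] is positive definite. Then the Cholesky factor L̄ = [[Ā,0,0],[ā, b̄, 0],[B̄, c̄, C̄]] of Σ̄ satisfies Ā = A, B̄ = B, ā = (A⁻¹σ₁)ᵀ, b̄ b̄ᵀ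 = σ − ā āᵀ, c̄ = (b̄⁻¹(σ₂ᵀ − ā Bᵀ))ᵀ, and C̄ C̄ᵀ = C Cᵀ − c̄ c̄ᵀ. -/
/-!
The leading block `Σ₁₁` is shared by `Σ` and `Σ̄`, so uniqueness of the Cholesky factor gives
`Ā = A`. Every other block of `L̄` is then read off by comparing the blocks of `L̄ L̄ᵀ = Σ̄` with
those of `L Lᵀ = Σ`, cancelling the invertible triangular factors `A` and `b̄` where needed.
-/

open Matrix

namespace Matrix

section Triangular

variable {n R : Type*} [Fintype n] [LinearOrder n]

theorem IsLowerTriangular.det_pos [CommRing R] [LinearOrder R] [IsStrictOrderedRing R]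
    {L : Matrix n n R} (hL : L.IsLowerTriangular) (hdiag : ∀ i, 0 < L i i) : 0 < L.det := by
  rw [det_of_isLowerTriangular L hL]
  exact Finset.prod_pos fun i _ => hdiag i

theorem IsLowerTriangular.isDiag_of_mul_transpose_eq_one [CommRing R] {D : Matrix n n R}
    (hD : D.IsLowerTriangular) (h : D * Dᵀ = 1) : D.IsDiag := by
  let := invertibleOfRightInverse D Dᵀ h
  have hinv : D⁻¹.IsLowerTriangular := blockTriangular_inv_of_blockTriangular hD
  rw [inv_eq_right_inv h] at hinv
  intro i j hij
  rcases hij.lt_or_gt with hlt | hgt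
  · exact hD hlt
  · exact hinv hgt

/-- Uniqueness of the Cholesky factor: `L₂⁻¹ L₁` is lower triangular and orthogonal, hence
diagonal with entries `±1`, and positivity of the diagonals forces it to be `1`. -/
theorem IsLowerTriangular.eq_of_mul_transpose_eq [Field R] [LinearOrder R] [IsStrictOrderedRing R]
    {L₁ L₂ : Matrix n n R} (h₁ : L₁.IsLowerTriangular) (hdiag₁ : ∀ i, 0 < L₁ i i)
    (h₂ : L₂.IsLowerTriangular) (hdiag₂ : ∀ i, 0 < L₂ i i) (h : L₁ * L₁ᵀ = L₂ * L₂ᵀ) :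
    L₁ = L₂ := by
  have hu₂ : IsUnit L₂.det := (h₂.det_pos hdiag₂).ne'.isUnit
  let := invertibleOfIsUnitDet L₂ hu₂
  have hDD : (L₂⁻¹ * L₁) * (L₂⁻¹ * L₁)ᵀ = 1 := by
    rw [transpose_mul, transpose_nonsing_inv, Matrix.mul_assoc, ← Matrix.mul_assoc L₁, h,
      Matrix.mul_assoc, mul_nonsing_inv _ (by rwa [det_transpose]), Matrix.mul_one,
      inv_mul_of_invertible]
  obtain ⟨d, hd⟩ : ∃ d, L₂⁻¹ * L₁ = diagonal d :=
    ⟨_, (IsLowerTriangular.isDiag_of_mul_transpose_eq_one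
      ((blockTriangular_inv_of_blockTriangular h₂).mul h₁) hDD).diagonal_diag.symm⟩
  have hL₁ : L₁ = L₂ * diagonal d := by rw [← hd, mul_inv_cancel_left_of_invertible]
  rw [hd, diagonal_transpose, diagonal_mul_diagonal, ← diagonal_one, diagonal_eq_diagonal_iff]
    at hDD
  have hd_one : d = fun _ => 1 := funext fun i => by
    have hpos : 0 < d i :=
      pos_of_mul_pos_right (by simpa [hL₁] using hdiag₁ i) (hdiag₂ i).le
    exact (mul_self_eq_one_iff.mp (hDD i)).resolve_right (by linarith)
  rw [hL₁, hd_one, diagonal_one, Matrix.mul_one]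

end Triangular

theorem fromBlocks_zero₁₂_mul_transpose {k l m o R : Type*} [Fintype l] [Fintype m]
    [CommSemiring R] (A : Matrix k l R) (B : Matrix o l R) (C : Matrix o m R) :
    fromBlocks A 0 B C * (fromBlocks A 0 B C)ᵀ =
      fromBlocks (A * Aᵀ) (A * Bᵀ) (B * Aᵀ) (B * Bᵀ + C * Cᵀ) := by
  simp [fromBlocks_transpose, fromBlocks_multiply]

theorem eq_transpose_inv_mul_of_mul_transpose_eq {m n R : Type*} [Fintype n] [DecidableEq n]
    [CommRing R] {L : Matrix n n R} {X : Matrix m n R} {Y : Matrix n m R} (hL : IsUnit L.det)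
    (h : L * Xᵀ = Y) : X = (L⁻¹ * Y)ᵀ := by
  rw [← h, nonsing_inv_mul_cancel_left _ _ hL, transpose_transpose]

end Matrix

theorem stmt12_general (p q r : ℕ)
    (S11 : Matrix (Fin p) (Fin p) ℝ) (S12 : Matrix (Fin p) (Fin r) ℝ)
    (S21 : Matrix (Fin r) (Fin p) ℝ) (S22 : Matrix (Fin r) (Fin r) ℝ)
    (s1 : Matrix (Fin p) (Fin q) ℝ) (s0 : Matrix (Fin q) (Fin q) ℝ)
    (s2 : Matrix (Fin r) (Fin q) ℝ)
    (A Abar : Matrix (Fin p) (Fin p) ℝ) (B Bbar : Matrix (Fin r) (Fin p) ℝ)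
    (C Cbar : Matrix (Fin r) (Fin r) ℝ)
    (abar : Matrix (Fin q) (Fin p) ℝ) (bbar : Matrix (Fin q) (Fin q) ℝ)
    (cbar : Matrix (Fin r) (Fin q) ℝ)
    (hAtri : ∀ i j : Fin p, i < j → A i j = 0) (hAdiag : ∀ i : Fin p, 0 < A i i)
    (hAbtri : ∀ i j : Fin p, i < j → Abar i j = 0) (hAbdiag : ∀ i : Fin p, 0 < Abar i i)
    (hbbtri : ∀ i j : Fin q, i < j → bbar i j = 0) (hbbdiag : ∀ i : Fin q, 0 < bbar i i)
    (hL : Matrix.fromBlocks A 0 B C * (Matrix.fromBlocks A 0 B C)ᵀ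
            = Matrix.fromBlocks S11 S12 S21 S22)
    (hLbar : Matrix.fromBlocks Abar 0 (Matrix.fromRows abar Bbar)
                (Matrix.fromBlocks bbar 0 cbar Cbar) *
              (Matrix.fromBlocks Abar 0 (Matrix.fromRows abar Bbar)
                (Matrix.fromBlocks bbar 0 cbar Cbar))ᵀ
            = Matrix.fromBlocks S11 (Matrix.fromCols s1 S12)
                (Matrix.fromRows s1ᵀ S21)
                (Matrix.fromBlocks s0 s2ᵀ s2 S22)) :
    Abar = A ∧ Bbar = B ∧ abar = (A⁻¹ * s1)ᵀ ∧ bbar * bbarᵀ = s0 - abar * abarᵀ ∧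
      cbar = (bbar⁻¹ * (s2ᵀ - abar * Bᵀ))ᵀ ∧ Cbar * Cbarᵀ = C * Cᵀ - cbar * cbarᵀ := by
  rw [fromBlocks_zero₁₂_mul_transpose, fromBlocks_inj] at hL hLbar
  obtain ⟨hS11, hS12, -, hS22⟩ := hL
  obtain ⟨hS11', hS12', -, hS22'⟩ := hLbar
  rw [transpose_fromRows, mul_fromCols, fromCols_ext_iff] at hS12'
  rw [fromBlocks_zero₁₂_mul_transpose, transpose_fromRows, fromRows_mul_fromCols, fromBlocks_add,
    fromBlocks_inj] at hS22'
  obtain ⟨hs1, hS12'⟩ := hS12'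
  obtain ⟨hs0, hs2, -, hS22'⟩ := hS22'
  have hA : IsUnit A.det := (IsLowerTriangular.det_pos hAtri hAdiag).ne'.isUnit
  have hbbar : IsUnit bbar.det := (IsLowerTriangular.det_pos hbbtri hbbdiag).ne'.isUnit
  have hAbar : Abar = A :=
    IsLowerTriangular.eq_of_mul_transpose_eq hAbtri hAbdiag hAtri hAdiag (hS11'.trans hS11.symm)
  subst hAbar
  have hBbar : Bbar = B := by
    rw [eq_transpose_inv_mul_of_mul_transpose_eq hA hS12',
      eq_transpose_inv_mul_of_mul_transpose_eq hA hS12]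
  subst hBbar
  refine ⟨rfl, rfl, eq_transpose_inv_mul_of_mul_transpose_eq hA hs1, eq_sub_of_add_eq' hs0,
    eq_transpose_inv_mul_of_mul_transpose_eq hbbar (eq_sub_of_add_eq' hs2), ?_⟩
  rw [← hS22'] at hS22
  exact eq_sub_of_add_eq' (add_left_cancel hS22).symm

/-- Cholesky update under inserting a middle block row/column. If
`Σ = [[Σ₁₁,Σ₁₂],[Σ₂₁,Σ₂₂]]` has Cholesky factor `L = [[A,0],[B,C]]` and the positive-definite
augmented matrix `Σ̄ = [[Σ₁₁,σ₁,Σ₁₂],[σ₁ᵀ,σ,σ₂ᵀ],[Σ₂₁,σ₂,Σ₂₂]]` has Cholesky factor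
`L̄ = [[Ā,0,0],[ā,b̄,0],[B̄,c̄,C̄]]` (all diagonal block factors lower triangular with positive
diagonals), then `Ā = A`, `B̄ = B`, `ā = (A⁻¹σ₁)ᵀ`, `b̄ b̄ᵀ = σ − ā āᵀ`,
`c̄ = (b̄⁻¹(σ₂ᵀ − ā Bᵀ))ᵀ` and `C̄ C̄ᵀ = C Cᵀ − c̄ c̄ᵀ`. -/
theorem stmt12 (p q r : ℕ)
    (S11 : Matrix (Fin p) (Fin p) ℝ) (S12 : Matrix (Fin p) (Fin r) ℝ)
    (S21 : Matrix (Fin r) (Fin p) ℝ) (S22 : Matrix (Fin r) (Fin r) ℝ)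
    (s1 : Matrix (Fin p) (Fin q) ℝ) (s0 : Matrix (Fin q) (Fin q) ℝ)
    (s2 : Matrix (Fin r) (Fin q) ℝ)
    (A Abar : Matrix (Fin p) (Fin p) ℝ) (B Bbar : Matrix (Fin r) (Fin p) ℝ)
    (C Cbar : Matrix (Fin r) (Fin r) ℝ)
    (abar : Matrix (Fin q) (Fin p) ℝ) (bbar : Matrix (Fin q) (Fin q) ℝ)
    (cbar : Matrix (Fin r) (Fin q) ℝ)
    (hAtri : ∀ i j : Fin p, i < j → A i j = 0) (hAdiag : ∀ i : Fin p, 0 < A i i)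
    (hCtri : ∀ i j : Fin r, i < j → C i j = 0) (hCdiag : ∀ i : Fin r, 0 < C i i)
    (hAbtri : ∀ i j : Fin p, i < j → Abar i j = 0) (hAbdiag : ∀ i : Fin p, 0 < Abar i i)
    (hbbtri : ∀ i j : Fin q, i < j → bbar i j = 0) (hbbdiag : ∀ i : Fin q, 0 < bbar i i)
    (hCbtri : ∀ i j : Fin r, i < j → Cbar i j = 0) (hCbdiag : ∀ i : Fin r, 0 < Cbar i i)
    (hPD : (Matrix.fromBlocks S11 (Matrix.fromCols s1 S12)
              (Matrix.fromRows s1ᵀ S21)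
              (Matrix.fromBlocks s0 s2ᵀ s2 S22)).PosDef)
    (hL : Matrix.fromBlocks A 0 B C * (Matrix.fromBlocks A 0 B C)ᵀ
            = Matrix.fromBlocks S11 S12 S21 S22)
    (hLbar : Matrix.fromBlocks Abar 0 (Matrix.fromRows abar Bbar)
                (Matrix.fromBlocks bbar 0 cbar Cbar) *
              (Matrix.fromBlocks Abar 0 (Matrix.fromRows abar Bbar)
                (Matrix.fromBlocks bbar 0 cbar Cbar))ᵀ
            = Matrix.fromBlocks S11 (Matrix.fromCols s1 S12)
                (Matrix.fromRows s1ᵀ S21)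
                (Matrix.fromBlocks s0 s2ᵀ s2 S22)) :
    Abar = A ∧ Bbar = B ∧ abar = (A⁻¹ * s1)ᵀ ∧ bbar * bbarᵀ = s0 - abar * abarᵀ ∧
      cbar = (bbar⁻¹ * (s2ᵀ - abar * Bᵀ))ᵀ ∧ Cbar * Cbarᵀ = C * Cᵀ - cbar * cbarᵀ :=
  stmt12_general p q r S11 S12 S21 S22 s1 s0 s2 A Abar B Bbar C Cbar abar bbar cbar hAtri hAdiag
    hAbtri hAbdiag hbbtri hbbdiag hL hLbar
end
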